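/- If the Voronoi cell of a data point p ∈ P contains a point of the convex hull of Q in its interior region (i.e., some x ∈ conv(Q) satisfies d(x,p) < d(x,p') for all p' ∈ P with p' ≠ p), then p is a spatial skyline point with respect to Q. -/

import Mathlib

/-! The points weakly closer to `p'` than to `p` form a closed half-space, hence a convex set.
So if `p'` dominates `p`, the whole convex hull of `Q` is weakly closer to `p'`, which contradicts
`x ∈ conv Q` lying strictly inside the Voronoi cell of `p`. -/

def SpatiallyDominates {d : ℕ} (Q : Finset (EuclideanSpace ℝ (Fin d)))
    (a b : EuclideanSpace ℝ (Fin d)) : Prop :=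
  (∀ q ∈ Q, dist a q ≤ dist b q) ∧ ∃ q ∈ Q, dist a q < dist b q

section

variable {F : Type*} [NormedAddCommGroup F] [InnerProductSpace ℝ F]

open RealInnerProductSpace

theorem dist_le_dist_iff_inner_le (a b x : F) :
    dist x a ≤ dist x b ↔ ⟪b - a, x⟫ ≤ (‖b‖ ^ 2 - ‖a‖ ^ 2) / 2 := by
  rw [dist_eq_norm, dist_eq_norm, ← sq_le_sq₀ (norm_nonneg _) (norm_nonneg _),
    norm_sub_sq_real, norm_sub_sq_real, inner_sub_left, real_inner_comm a, real_inner_comm b]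
  constructor <;> intro h <;> linarith

theorem convex_setOf_dist_le_dist (a b : F) : Convex ℝ {x : F | dist x a ≤ dist x b} := by
  simp_rw [dist_le_dist_iff_inner_le a b]
  exact convex_halfSpace_le (innerₛₗ ℝ (b - a)).isLinear _

theorem dist_le_dist_of_mem_convexHull {s : Set F} {a b x : F}
    (hs : ∀ q ∈ s, dist q a ≤ dist q b) (hx : x ∈ convexHull ℝ s) : dist x a ≤ dist x b :=
  convexHull_min hs (convex_setOf_dist_le_dist a b) hx

end

theorem stmt9_general (d : ℕ) (P Q : Finset (EuclideanSpace ℝ (Fin d)))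
    (p : EuclideanSpace ℝ (Fin d))
    (h : ∃ x ∈ convexHull ℝ (Q : Set (EuclideanSpace ℝ (Fin d))),
      ∀ p' ∈ P, p' ≠ p → dist x p < dist x p') :
    ∀ p' ∈ P, p' ≠ p → ¬ SpatiallyDominates Q p' p := by
  rintro p' hp' hne ⟨hdom, -⟩
  obtain ⟨x, hx, hcell⟩ := h
  have hQ : ∀ q ∈ (Q : Set _), dist q p' ≤ dist q p := fun q hq => by
    simpa only [dist_comm q] using hdom q hq
  exact (dist_le_dist_of_mem_convexHull hQ hx).not_gt (hcell p' hp' hne)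

theorem stmt9 (d : ℕ) (P Q : Finset (EuclideanSpace ℝ (Fin d))) (hQ : Q.Nonempty)
    (p : EuclideanSpace ℝ (Fin d)) (hp : p ∈ P)
    (h : ∃ x ∈ convexHull ℝ (Q : Set (EuclideanSpace ℝ (Fin d))),
      ∀ p' ∈ P, p' ≠ p → dist x p < dist x p') :
    ∀ p' ∈ P, p' ≠ p → ¬ SpatiallyDominates Q p' p :=
  stmt9_general d P Q p h
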